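/- arXiv:quant-ph/0511260 — 7 statements merged into one kernel-verified Lean document; each statement's English description precedes it below -/
import Mathlib

section
/- Strong subadditivity of von Neumann entropy follows from monotonicity of relative entropy: if D(ρ^{ABC} ‖ ρ^{AB} ⊗ ρ^C) ≥ D(ρ^{BC} ‖ ρ^B ⊗ ρ^C) holds for every tripartite density operator ρ^{ABC}, then S(ρ^{AB}) + S(ρ^{BC}) ≥ S(ρ^{ABC}) + S(ρ^B) for every tripartite density operator ρ^{ABC}. -/
/-!
For a bipartite state `ρ` with marginals `σ = tr₂ ρ` and `τ = tr₁ ρ` one has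
`D(ρ ‖ σ ⊗ τ) = S(σ) + S(τ) - S(ρ)`. Applied to `ρ^{AB|C}` and to `ρ^{B|C} = tr_A ρ`, the
hypothesis `I(AB : C) ≥ I(B : C)` rearranges to strong subadditivity, since reassociating
`A ⊗ (B ⊗ C)` does not change the entropy.

The identity amounts to `tr ρ log (σ ⊗ τ) = tr σ log σ + tr τ log τ`. In the product eigenbasis of
`σ ⊗ τ` the diagonal weights of `ρ` are nonnegative and sum, over the second index, to the
eigenvalues of `σ` (and symmetrically for `τ`). So they vanish wherever an eigenvalue of `σ` or `τ`
does, which makes the convention `log 0 = 0` harmless, and elsewhere `log (a b) = log a + log b`.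
-/

open Matrix Kronecker
open scoped ComplexOrder

/-- Matrix logarithm (base 2) of a Hermitian matrix via its spectral
decomposition, with the convention `log 0 = 0`; junk value `0` on
non-Hermitian input. -/
noncomputable def matLog {ι : Type*} [Fintype ι] [DecidableEq ι]
    (A : Matrix ι ι ℂ) : Matrix ι ι ℂ :=
  if h : A.IsHermitian then
    (h.eigenvectorUnitary : Matrix ι ι ℂ) *
      Matrix.diagonal (fun i => (Real.logb 2 (h.eigenvalues i) : ℂ)) *
      star (h.eigenvectorUnitary : Matrix ι ι ℂ)
  else 0

/-- Quantum relative entropy `D(ρ‖σ) = tr ρ (log ρ − log σ)` (base-2 logs). -/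
noncomputable def relEnt {ι : Type*} [Fintype ι] [DecidableEq ι]
    (ρ σ : Matrix ι ι ℂ) : ℝ :=
  ((ρ * (matLog ρ - matLog σ)).trace).re

/-- Von Neumann entropy `S(ρ) = −tr ρ log ρ` (base-2 log). -/
noncomputable def vnEnt {ι : Type*} [Fintype ι] [DecidableEq ι]
    (ρ : Matrix ι ι ℂ) : ℝ :=
  -((ρ * matLog ρ).trace).re

/-- `ρ` is a density matrix: positive semidefinite with unit trace. -/
def IsDensity {ι : Type*} [Fintype ι] (ρ : Matrix ι ι ℂ) : Prop :=
  ρ.PosSemidef ∧ ρ.trace = 1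

/-- Support inclusion `supp ρ ⊆ supp σ` (for PSD matrices), expressed via
kernel containment: every vector annihilated by `σ` is annihilated by `ρ`. -/
def SuppLE {ι : Type*} [Fintype ι] (ρ σ : Matrix ι ι ℂ) : Prop :=
  ∀ v : ι → ℂ, σ *ᵥ v = 0 → ρ *ᵥ v = 0

variable {α β γ : Type*}

/-- Reduced state on `AB` of a tripartite state on `A ⊗ B ⊗ C`. -/
noncomputable def trC [Fintype γ] (M : Matrix (α × β × γ) (α × β × γ) ℂ) :
    Matrix (α × β) (α × β) ℂ :=
  fun i j => ∑ k : γ, M (i.1, i.2, k) (j.1, j.2, k)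

/-- Reduced state on `BC`. -/
noncomputable def trA [Fintype α] (M : Matrix (α × β × γ) (α × β × γ) ℂ) :
    Matrix (β × γ) (β × γ) ℂ :=
  fun i j => ∑ k : α, M (k, i.1, i.2) (k, j.1, j.2)

/-- Reduced state on `B`. -/
noncomputable def trAC [Fintype α] [Fintype γ]
    (M : Matrix (α × β × γ) (α × β × γ) ℂ) : Matrix β β ℂ :=
  fun i j => ∑ k : α, ∑ l : γ, M (k, i, l) (k, j, l)

/-- Reduced state on `C`. -/
noncomputable def trAB [Fintype α] [Fintype β]
    (M : Matrix (α × β × γ) (α × β × γ) ℂ) : Matrix γ γ ℂ :=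
  fun i j => ∑ k : α, ∑ l : β, M (k, l, i) (k, l, j)

/-- Reassociation `A ⊗ (B ⊗ C) ≃ (A ⊗ B) ⊗ C`. -/
def assocM (M : Matrix (α × β × γ) (α × β × γ) ℂ) :
    Matrix ((α × β) × γ) ((α × β) × γ) ℂ :=
  fun p q => M (p.1.1, p.1.2, p.2) (q.1.1, q.1.2, q.2)

namespace Matrix

variable {ι κ R : Type*}

theorem trace_submatrix_equiv [Fintype ι] [Fintype κ] [AddCommMonoid R] (A : Matrix ι ι R)
    (e : κ ≃ ι) : (A.submatrix e e).trace = A.trace :=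
  e.sum_comp A.diag

theorem star_kronecker [CommSemiring R] [StarRing R] (A : Matrix ι ι R) (B : Matrix κ κ R) :
    star (A ⊗ₖ B) = star A ⊗ₖ star B :=
  conjTranspose_kronecker A B

theorem trace_mul_mul_diagonal_mul [Fintype ι] [DecidableEq ι] [CommSemiring R]
    (A B C : Matrix ι ι R) (c : ι → R) :
    (A * (B * diagonal c * C)).trace = ∑ i, c i * (C * A * B) i i := by
  rw [← mul_assoc, trace_mul_cycle, ← mul_assoc]
  simp only [trace, diag, mul_diagonal, mul_comm]

theorem diagonal_comp_mul_eq_mul_diagonal_comp [Fintype ι] [Fintype κ] [DecidableEq ι]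
    [DecidableEq κ] [CommRing R] [IsDomain R] {M : Matrix ι κ R} {μ : ι → R} {d : κ → R}
    (h : diagonal μ * M = M * diagonal d) (f : R → R) :
    diagonal (fun i => f (μ i)) * M = M * diagonal (fun k => f (d k)) := by
  ext i k
  have hik := congr_fun₂ h i k
  simp only [diagonal_mul, mul_diagonal] at hik ⊢
  rcases eq_or_ne (M i k) 0 with hM | hM
  · simp [hM]
  · rw [mul_right_cancel₀ hM (hik.trans (mul_comm _ _)), mul_comm]

theorem mul_diagonal_mul_kronecker_mul_diagonal_mul [Fintype ι] [Fintype κ] [DecidableEq ι]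
    [DecidableEq κ] [CommSemiring R] (A B : Matrix ι ι R) (C D : Matrix κ κ R) (c : ι → R)
    (d : κ → R) :
    (A * diagonal c * B) ⊗ₖ (C * diagonal d * D)
      = (A ⊗ₖ C) * diagonal (fun p => c p.1 * d p.2) * (B ⊗ₖ D) := by
  rw [mul_kronecker_mul, mul_kronecker_mul, diagonal_kronecker_diagonal]

theorem submatrix_mem_unitary [Fintype ι] [Fintype κ] [DecidableEq ι] [DecidableEq κ]
    [CommSemiring R] [StarRing R] {U : Matrix ι ι R} (hU : U ∈ unitary (Matrix ι ι R))
    (e : κ ≃ ι) : U.submatrix e e ∈ unitary (Matrix κ κ R) := by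
  rw [Unitary.mem_iff] at hU ⊢
  simp only [star_eq_conjTranspose, conjTranspose_submatrix, submatrix_mul_equiv] at hU ⊢
  simp only [hU.1, hU.2, submatrix_one_equiv, and_self]

theorem submatrix_mul_diagonal_mul_star [Fintype ι] [Fintype κ] [DecidableEq ι] [DecidableEq κ]
    [CommSemiring R] [StarRing R] (U : Matrix ι ι R) (c : ι → R) (e : κ ≃ ι) :
    (U * diagonal c * star U).submatrix e e
      = U.submatrix e e * diagonal (c ∘ e) * star (U.submatrix e e) := by
  rw [star_eq_conjTranspose, star_eq_conjTranspose, conjTranspose_submatrix,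
    ← submatrix_diagonal_equiv, submatrix_mul_equiv, submatrix_mul_equiv]

def traceRight [Fintype κ] [AddCommMonoid R] (M : Matrix (ι × κ) (ι × κ) R) : Matrix ι ι R :=
  of fun i j => ∑ k, M (i, k) (j, k)

def traceLeft [Fintype ι] [AddCommMonoid R] (M : Matrix (ι × κ) (ι × κ) R) : Matrix κ κ R :=
  of fun k l => ∑ i, M (i, k) (i, l)

theorem traceRight_eq_sum_submatrix [Fintype κ] [AddCommMonoid R]
    (M : Matrix (ι × κ) (ι × κ) R) : M.traceRight = ∑ k, M.submatrix (·, k) (·, k) := by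
  ext i j
  simp [traceRight, sum_apply]

theorem traceLeft_eq_sum_submatrix [Fintype ι] [AddCommMonoid R]
    (M : Matrix (ι × κ) (ι × κ) R) : M.traceLeft = ∑ i, M.submatrix (Prod.mk i) (Prod.mk i) := by
  ext k l
  simp [traceLeft, sum_apply]

theorem PosSemidef.traceRight [Fintype κ] [Ring R] [PartialOrder R] [StarRing R] [AddLeftMono R]
    {M : Matrix (ι × κ) (ι × κ) R} (hM : M.PosSemidef) : M.traceRight.PosSemidef := by
  rw [traceRight_eq_sum_submatrix]
  exact posSemidef_sum _ fun k _ => hM.submatrix _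

theorem PosSemidef.traceLeft [Fintype ι] [Ring R] [PartialOrder R] [StarRing R] [AddLeftMono R]
    {M : Matrix (ι × κ) (ι × κ) R} (hM : M.PosSemidef) : M.traceLeft.PosSemidef := by
  rw [traceLeft_eq_sum_submatrix]
  exact posSemidef_sum _ fun i _ => hM.submatrix _

theorem trace_mul_kronecker_one [Fintype ι] [Fintype κ] [DecidableEq κ] [Semiring R]
    (M : Matrix (ι × κ) (ι × κ) R) (X : Matrix ι ι R) :
    (M * (X ⊗ₖ (1 : Matrix κ κ R))).trace = (M.traceRight * X).trace := by
  simp only [trace, diag_apply, mul_apply, kroneckerMap_apply, one_apply, mul_ite, mul_one,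
    mul_zero, Fintype.sum_prod_type, Finset.sum_ite_eq', Finset.mem_univ, ↓reduceIte, traceRight,
    of_apply, Finset.sum_mul]
  exact Finset.sum_congr rfl fun _ _ => Finset.sum_comm

theorem trace_mul_one_kronecker [Fintype ι] [Fintype κ] [DecidableEq ι] [Semiring R]
    (M : Matrix (ι × κ) (ι × κ) R) (Y : Matrix κ κ R) :
    (M * ((1 : Matrix ι ι R) ⊗ₖ Y)).trace = (M.traceLeft * Y).trace := by
  simp only [trace, diag_apply, mul_apply, kroneckerMap_apply, one_apply, ite_mul, one_mul,
    zero_mul, mul_ite, mul_zero, Fintype.sum_prod_type, Finset.sum_ite_irrel,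
    Finset.sum_const_zero, Finset.sum_ite_eq', Finset.mem_univ, ↓reduceIte, traceLeft, of_apply,
    Finset.sum_mul]
  rw [Finset.sum_comm]
  exact Finset.sum_congr rfl fun _ _ => Finset.sum_comm

section ProductBasis

variable [Fintype ι] [Fintype κ] [DecidableEq ι] [DecidableEq κ]

theorem sum_mul_diag_conj_kronecker_fst [CommSemiring R] [StarRing R]
    (M : Matrix (ι × κ) (ι × κ) R) (U : Matrix ι ι R) {V : Matrix κ κ R} (hV : V * star V = 1)
    (f : ι → R) :
    ∑ p, f p.1 * (star (U ⊗ₖ V) * M * (U ⊗ₖ V)) p p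
      = (M.traceRight * (U * diagonal f * star U)).trace := by
  calc ∑ p, f p.1 * (star (U ⊗ₖ V) * M * (U ⊗ₖ V)) p p
      = (M * ((U * diagonal f * star U) ⊗ₖ (V * diagonal (fun _ => 1) * star V))).trace := by
        rw [mul_diagonal_mul_kronecker_mul_diagonal_mul, ← star_kronecker,
          trace_mul_mul_diagonal_mul]
        simp only [mul_one]
    _ = (M.traceRight * (U * diagonal f * star U)).trace := by
        rw [diagonal_one, mul_one, hV, trace_mul_kronecker_one]

theorem sum_mul_diag_conj_kronecker_snd [CommSemiring R] [StarRing R]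
    (M : Matrix (ι × κ) (ι × κ) R) {U : Matrix ι ι R} (hU : U * star U = 1) (V : Matrix κ κ R)
    (g : κ → R) :
    ∑ p, g p.2 * (star (U ⊗ₖ V) * M * (U ⊗ₖ V)) p p
      = (M.traceLeft * (V * diagonal g * star V)).trace := by
  calc ∑ p, g p.2 * (star (U ⊗ₖ V) * M * (U ⊗ₖ V)) p p
      = (M * ((U * diagonal (fun _ => 1) * star U) ⊗ₖ (V * diagonal g * star V))).trace := by
        rw [mul_diagonal_mul_kronecker_mul_diagonal_mul, ← star_kronecker,
          trace_mul_mul_diagonal_mul]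
        simp only [one_mul]
    _ = (M.traceLeft * (V * diagonal g * star V)).trace := by
        rw [diagonal_one, mul_one, hU, trace_mul_one_kronecker]

theorem PosSemidef.diag_conj_kronecker_eq_zero_of_fst {ρ : Matrix (ι × κ) (ι × κ) ℂ}
    (hρ : ρ.PosSemidef) (U : Matrix ι ι ℂ) {V : Matrix κ κ ℂ} (hV : V * star V = 1) {i : ι}
    (hi : (star U * ρ.traceRight * U) i i = 0) (k : κ) :
    (star (U ⊗ₖ V) * ρ * (U ⊗ₖ V)) (i, k) (i, k) = 0 := by
  have hsum : ∑ k', (star (U ⊗ₖ V) * ρ * (U ⊗ₖ V)) (i, k') (i, k') = 0 := by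
    have := sum_mul_diag_conj_kronecker_fst ρ U hV (Pi.single i 1)
    rw [trace_mul_mul_diagonal_mul] at this
    simpa [Fintype.sum_prod_type_right, Pi.single_apply, hi] using this
  exact (Finset.sum_eq_zero_iff_of_nonneg fun k' _ =>
    (hρ.conjTranspose_mul_mul_same (U ⊗ₖ V)).diag_nonneg).mp hsum k (Finset.mem_univ k)

theorem PosSemidef.diag_conj_kronecker_eq_zero_of_snd {ρ : Matrix (ι × κ) (ι × κ) ℂ}
    (hρ : ρ.PosSemidef) {U : Matrix ι ι ℂ} (hU : U * star U = 1) (V : Matrix κ κ ℂ) {k : κ}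
    (hk : (star V * ρ.traceLeft * V) k k = 0) (i : ι) :
    (star (U ⊗ₖ V) * ρ * (U ⊗ₖ V)) (i, k) (i, k) = 0 := by
  have hsum : ∑ i', (star (U ⊗ₖ V) * ρ * (U ⊗ₖ V)) (i', k) (i', k) = 0 := by
    have := sum_mul_diag_conj_kronecker_snd ρ hU V (Pi.single k 1)
    rw [trace_mul_mul_diagonal_mul] at this
    simpa [Fintype.sum_prod_type, Pi.single_apply, hk] using this
  exact (Finset.sum_eq_zero_iff_of_nonneg fun i' _ =>
    (hρ.conjTranspose_mul_mul_same (U ⊗ₖ V)).diag_nonneg).mp hsum i (Finset.mem_univ i)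

end ProductBasis

namespace IsHermitian

variable [Fintype ι] [DecidableEq ι] {A : Matrix ι ι ℂ}

theorem eq_mul_diagonal_mul_star (hA : A.IsHermitian) :
    A = (hA.eigenvectorUnitary : Matrix ι ι ℂ) * diagonal (fun i => (hA.eigenvalues i : ℂ))
      * star (hA.eigenvectorUnitary : Matrix ι ι ℂ) := by
  simpa [Function.comp_def] using hA.spectral_theorem

theorem star_eigenvectorUnitary_mul_mul (hA : A.IsHermitian) :
    star (hA.eigenvectorUnitary : Matrix ι ι ℂ) * A * (hA.eigenvectorUnitary : Matrix ι ι ℂ)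
      = diagonal (fun i => (hA.eigenvalues i : ℂ)) := by
  simpa [Function.comp_def] using hA.conjStarAlgAut_star_eigenvectorUnitary

theorem matLog_eq (hA : A.IsHermitian) :
    matLog A = (hA.eigenvectorUnitary : Matrix ι ι ℂ)
      * diagonal (fun i => (Real.logb 2 (hA.eigenvalues i) : ℂ))
      * star (hA.eigenvectorUnitary : Matrix ι ι ℂ) :=
  dif_pos hA

end IsHermitian

end Matrix

open Matrix

section Entropy

variable {ι κ : Type*} [Fintype ι] [DecidableEq ι] [Fintype κ] [DecidableEq κ]

theorem matLog_unitary_conj_diagonal {U : Matrix ι ι ℂ} (hU : U ∈ unitary (Matrix ι ι ℂ))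
    (d : ι → ℝ) :
    matLog (U * diagonal (fun i => (d i : ℂ)) * star U)
      = U * diagonal (fun i => (Real.logb 2 (d i) : ℂ)) * star U := by
  have hA : (U * diagonal (fun i => (d i : ℂ)) * star U).IsHermitian :=
    isHermitian_mul_mul_conjTranspose U <|
      isHermitian_diagonal_of_self_adjoint _ <| funext fun i => Complex.conj_ofReal (d i)
  rw [hA.matLog_eq]
  set V : Matrix ι ι ℂ := (hA.eigenvectorUnitary : Matrix ι ι ℂ)
  have hVV (X : Matrix ι ι ℂ) : V * (star V * X) = X := by
    rw [← mul_assoc, (hA.eigenvectorUnitary.2 : V ∈ unitary _).2, one_mul]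
  -- `star V * U` intertwines two diagonalisations of the same matrix, hence also their logarithms
  have hM : diagonal (fun i => (hA.eigenvalues i : ℂ)) * (star V * U)
      = star V * U * diagonal (fun i => (d i : ℂ)) := by
    rw [← show star V * _ * V = _ from hA.star_eigenvectorUnitary_mul_mul]
    simp only [mul_assoc, hVV, hU.1, mul_one]
  have hlog := diagonal_comp_mul_eq_mul_diagonal_comp hM fun z => (Real.logb 2 z.re : ℂ)
  simp only [Complex.ofReal_re] at hlog
  calc V * diagonal (fun i => (Real.logb 2 (hA.eigenvalues i) : ℂ)) * star V
      = V * (diagonal (fun i => (Real.logb 2 (hA.eigenvalues i) : ℂ)) * (star V * U))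
          * star U := by
        simp only [mul_assoc, hU.2, mul_one]
    _ = U * diagonal (fun i => (Real.logb 2 (d i) : ℂ)) * star U := by
        rw [hlog]
        simp only [mul_assoc, hVV]

theorem Matrix.IsHermitian.matLog_submatrix_equiv {A : Matrix ι ι ℂ} (hA : A.IsHermitian)
    (e : κ ≃ ι) : matLog (A.submatrix e e) = (matLog A).submatrix e e := by
  conv_lhs => rw [hA.eq_mul_diagonal_mul_star]
  rw [submatrix_mul_diagonal_mul_star, Function.comp_def,
    matLog_unitary_conj_diagonal (submatrix_mem_unitary hA.eigenvectorUnitary.2 e),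
    hA.matLog_eq, submatrix_mul_diagonal_mul_star, Function.comp_def]

theorem Matrix.IsHermitian.vnEnt_submatrix_equiv {A : Matrix ι ι ℂ} (hA : A.IsHermitian)
    (e : κ ≃ ι) : vnEnt (A.submatrix e e) = vnEnt A := by
  rw [vnEnt, vnEnt, hA.matLog_submatrix_equiv, submatrix_mul_equiv, trace_submatrix_equiv]

theorem Matrix.IsHermitian.matLog_kronecker {σ : Matrix ι ι ℂ} {τ : Matrix κ κ ℂ}
    (hσ : σ.IsHermitian) (hτ : τ.IsHermitian) :
    matLog (σ ⊗ₖ τ)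
      = ((hσ.eigenvectorUnitary : Matrix ι ι ℂ) ⊗ₖ (hτ.eigenvectorUnitary : Matrix κ κ ℂ))
        * diagonal (fun p => (Real.logb 2 (hσ.eigenvalues p.1 * hτ.eigenvalues p.2) : ℂ))
        * star ((hσ.eigenvectorUnitary : Matrix ι ι ℂ)
          ⊗ₖ (hτ.eigenvectorUnitary : Matrix κ κ ℂ)) := by
  conv_lhs => rw [hσ.eq_mul_diagonal_mul_star, hτ.eq_mul_diagonal_mul_star]
  rw [mul_diagonal_mul_kronecker_mul_diagonal_mul, ← star_kronecker]
  simp only [← Complex.ofReal_mul]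
  exact matLog_unitary_conj_diagonal
    (kronecker_mem_unitary hσ.eigenvectorUnitary.2 hτ.eigenvectorUnitary.2) _

theorem trace_mul_matLog_kronecker_traceRight_traceLeft {ρ : Matrix (ι × κ) (ι × κ) ℂ}
    (hρ : ρ.PosSemidef) :
    (ρ * matLog (ρ.traceRight ⊗ₖ ρ.traceLeft)).trace
      = (ρ.traceRight * matLog ρ.traceRight).trace
        + (ρ.traceLeft * matLog ρ.traceLeft).trace := by
  have hσ := hρ.traceRight.1
  have hτ := hρ.traceLeft.1
  set U : Matrix ι ι ℂ := (hσ.eigenvectorUnitary : Matrix ι ι ℂ)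
  set V : Matrix κ κ ℂ := (hτ.eigenvectorUnitary : Matrix κ κ ℂ)
  set a := hσ.eigenvalues
  set b := hτ.eigenvalues
  set t : ι × κ → ℂ := fun p => (star (U ⊗ₖ V) * ρ * (U ⊗ₖ V)) p p
  have hsplit (p : ι × κ) : (Real.logb 2 (a p.1 * b p.2) : ℂ) * t p
      = (Real.logb 2 (a p.1) : ℂ) * t p + (Real.logb 2 (b p.2) : ℂ) * t p := by
    by_cases ha : a p.1 = 0
    · have ht : t p = 0 := hρ.diag_conj_kronecker_eq_zero_of_fst U hτ.eigenvectorUnitary.2.2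
        (by simp [U, hσ.star_eigenvectorUnitary_mul_mul, a, ha]) p.2
      simp [ht]
    by_cases hb : b p.2 = 0
    · have ht : t p = 0 := hρ.diag_conj_kronecker_eq_zero_of_snd hσ.eigenvectorUnitary.2.2 V
        (by simp [V, hτ.star_eigenvectorUnitary_mul_mul, b, hb]) p.1
      simp [ht]
    rw [Real.logb_mul ha hb]
    push_cast
    ring
  rw [hσ.matLog_kronecker hτ, trace_mul_mul_diagonal_mul,
    Finset.sum_congr rfl fun p _ => hsplit p, Finset.sum_add_distrib, hσ.matLog_eq, hτ.matLog_eq]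
  exact congrArg₂ (· + ·)
    (sum_mul_diag_conj_kronecker_fst ρ U hτ.eigenvectorUnitary.2.2 fun i => (Real.logb 2 (a i) : ℂ))
    (sum_mul_diag_conj_kronecker_snd ρ hσ.eigenvectorUnitary.2.2 V fun k => (Real.logb 2 (b k) : ℂ))

theorem relEnt_kronecker_traceRight_traceLeft {ρ : Matrix (ι × κ) (ι × κ) ℂ}
    (hρ : ρ.PosSemidef) :
    relEnt ρ (ρ.traceRight ⊗ₖ ρ.traceLeft)
      = vnEnt ρ.traceRight + vnEnt ρ.traceLeft - vnEnt ρ := by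
  rw [relEnt, mul_sub, trace_sub, Complex.sub_re,
    trace_mul_matLog_kronecker_traceRight_traceLeft hρ, Complex.add_re, vnEnt, vnEnt, vnEnt]
  ring

end Entropy

/-- Strong subadditivity of von Neumann entropy follows from monotonicity of
the relative entropy under the partial trace over `A`, applied to the pair
`(ρ^{ABC}, ρ^{AB} ⊗ ρ^C)`. -/
theorem ssa_of_relEnt_mono [Fintype α] [DecidableEq α] [Fintype β]
    [DecidableEq β] [Fintype γ] [DecidableEq γ]
    (hmono : ∀ ρ : Matrix (α × β × γ) (α × β × γ) ℂ, IsDensity ρ →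
      relEnt (assocM ρ) (trC ρ ⊗ₖ trAB ρ) ≥ relEnt (trA ρ) (trAC ρ ⊗ₖ trAB ρ)) :
    ∀ ρ : Matrix (α × β × γ) (α × β × γ) ℂ, IsDensity ρ →
      vnEnt (trC ρ) + vnEnt (trA ρ) ≥ vnEnt ρ + vnEnt (trAC ρ) := by
  intro ρ hρ
  have hC_AB : trAB ρ = (assocM ρ).traceLeft := by
    ext i j
    simp [trAB, traceLeft, assocM, Fintype.sum_prod_type]
  have hC_B : trAB ρ = (trA ρ).traceLeft := by
    ext i j
    exact Finset.sum_comm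
  have hB : trAC ρ = (trA ρ).traceRight := by
    ext i j
    exact Finset.sum_comm
  have hAB_C : relEnt (assocM ρ) (trC ρ ⊗ₖ trAB ρ)
      = vnEnt (trC ρ) + vnEnt (trAB ρ) - vnEnt ρ := by
    rw [hC_AB, ← hρ.1.1.vnEnt_submatrix_equiv (Equiv.prodAssoc α β γ)]
    exact relEnt_kronecker_traceRight_traceLeft (hρ.1.submatrix _)
  have hB_C : relEnt (trA ρ) (trAC ρ ⊗ₖ trAB ρ)
      = vnEnt (trAC ρ) + vnEnt (trAB ρ) - vnEnt (trA ρ) := by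
    rw [hC_B, hB]
    exact relEnt_kronecker_traceRight_traceLeft hρ.1.traceLeft
  have hmono_ρ := hmono ρ hρ
  rw [hAB_C, hB_C] at hmono_ρ
  linarith
end

section
/- Dilution of relative entropy: for density operators ρ, σ with supp ρ ⊆ supp σ and 0 ≤ λ ≤ 1, the relative entropy of the mixture satisfies D(λρ + (1−λ)σ ‖ σ) = λD(ρ‖σ) − α for some α with 0 ≤ α ≤ H₂(λ). -/
open Matrix Kronecker
open scoped ComplexOrder

/-- The binary entropy function (base-2 logs, with `H₂ 0 = H₂ 1 = 0`). -/
noncomputable def binEnt (x : ℝ) : ℝ :=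
  -(x * Real.logb 2 x) - (1 - x) * Real.logb 2 (1 - x)

/-!
With the convention `log 0 = 0`, linearity of the trace alone gives
`D(τ‖σ) = λ D(ρ‖σ) − χ` for `τ = λρ + (1−λ)σ` and the Holevo quantity
`χ = S(τ) − λ S(ρ) − (1−λ) S(σ)`, so it remains to bound `χ`.

`χ ≥ 0` is concavity of `S`: in the eigenbasis of `τ` the eigenvalues of `τ` are the
`λ`-mixture of the diagonals of `ρ` and `σ`, each diagonal is the image of the spectrum under
the doubly stochastic matrix `|Uᵢⱼ|²`, and `x ↦ −x log x` is concave.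

`χ ≤ H₂(λ)`: the spectral decompositions write `τ = K Kᴴ` with `K` having columns of squared
norms `λ pᵢ` and `(1−λ) qⱼ`. In the eigenbasis of `τ` the rows of `K` become orthogonal, with
squared norms the eigenvalues of `τ`; for a matrix with orthogonal rows the Shannon entropy of
the row norms is at most that of the column norms (Jensen, using that `Kᴴ (K Kᴴ)⁺ K` is a
projection), and the latter entropy is `H₂(λ) + λ S(ρ) + (1−λ) S(σ)`.
-/

open Real Finset Complex

theorem sum_mul_negMulLog_le_negMulLog_sum {κ : Type*} [Fintype κ] {w x : κ → ℝ}
    (hw : ∀ k, 0 ≤ w k) (hw1 : ∑ k, w k ≤ 1) (hx : ∀ k, 0 ≤ x k) :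
    ∑ k, w k * negMulLog (x k) ≤ negMulLog (∑ k, w k * x k) := by
  -- Jensen for the probability vector completed by the point `0`, where `negMulLog` vanishes.
  have := concaveOn_negMulLog.le_map_sum (t := univ)
    (w := fun o : Option κ => o.elim (1 - ∑ k, w k) w) (p := fun o : Option κ => o.elim 0 x)
    (by rintro (_ | k) -; exacts [sub_nonneg.2 hw1, hw k]) (by simp)
    (by rintro (_ | k) -; exacts [Set.self_mem_Ici, Set.mem_Ici.2 (hx k)])
  simpa [Fintype.sum_option] using this

theorem sum_negMulLog_mul_of_sum_eq_one {ι : Type*} [Fintype ι] {p : ι → ℝ}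
    (hp : ∑ i, p i = 1) (a : ℝ) :
    ∑ i, negMulLog (a * p i) = negMulLog a + a * ∑ i, negMulLog (p i) := by
  simp only [negMulLog_mul, sum_add_distrib, ← sum_mul, ← mul_sum, hp, one_mul]

theorem sum_negMulLog_le_sum_negMulLog_mulVec {ι : Type*} [Fintype ι] [DecidableEq ι]
    {D : Matrix ι ι ℝ} (hD : D ∈ doublyStochastic ℝ ι) {p : ι → ℝ} (hp : ∀ i, 0 ≤ p i) :
    ∑ i, negMulLog (p i) ≤ ∑ k, negMulLog ((D *ᵥ p) k) :=
  calc ∑ i, negMulLog (p i) = ∑ k, ∑ i, D k i * negMulLog (p i) := by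
        rw [sum_comm]; simp [← sum_mul, sum_col_of_mem_doublyStochastic hD]
    _ ≤ ∑ k, negMulLog ((D *ᵥ p) k) := sum_le_sum fun k _ =>
        sum_mul_negMulLog_le_negMulLog_sum (fun _ => nonneg_of_mem_doublyStochastic hD)
          (sum_row_of_mem_doublyStochastic hD k).le hp

/-- Weigh `negMulLog (∑ x, B k x)` by the subprobability vector `k ↦ B k x / ∑ y, B k y` and
apply Jensen in each column `x`. -/
theorem sum_negMulLog_rowSum_le_sum_negMulLog_colSum {κ χ : Type*} [Fintype κ] [Fintype χ]
    {B : κ → χ → ℝ} (hB : ∀ k x, 0 ≤ B k x) (h : ∀ x, ∑ k, B k x / ∑ y, B k y ≤ 1) :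
    ∑ k, negMulLog (∑ x, B k x) ≤ ∑ x, negMulLog (∑ k, B k x) := by
  set r := fun k => ∑ x, B k x
  have hr : ∀ k, 0 ≤ r k := fun k => sum_nonneg fun x _ => hB k x
  have hBr : ∀ k x, B k x / r k * r k = B k x := fun k x => by
    rcases (hr k).eq_or_lt with h0 | h0
    · simp [← h0, (sum_eq_zero_iff_of_nonneg fun y _ => hB k y).1 h0.symm x]
    · exact div_mul_cancel₀ _ h0.ne'
  calc ∑ k, negMulLog (r k) = ∑ x, ∑ k, B k x / r k * negMulLog (r k) := by
        rw [sum_comm]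
        refine sum_congr rfl fun k _ => ?_
        rw [← sum_mul, ← sum_div]
        rcases (hr k).eq_or_lt with h0 | h0
        · simp [← h0]
        · rw [div_self h0.ne', one_mul]
    _ ≤ ∑ x, negMulLog (∑ k, B k x) := sum_le_sum fun x _ => by
        simpa only [hBr] using sum_mul_negMulLog_le_negMulLog_sum
          (fun k => div_nonneg (hB k x) (hr k)) (h x) hr

theorem inv_mul_inv_mul_self {G₀ : Type*} [GroupWithZero G₀] (a : G₀) :
    a⁻¹ * a * a⁻¹ = a⁻¹ := by
  simpa using mul_inv_mul_cancel a⁻¹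

theorem mul_conjTranspose_apply_self {κ χ : Type*} [Fintype χ] (M : Matrix κ χ ℂ) (k : κ) :
    (M * Mᴴ) k k = ((∑ x, normSq (M k x) : ℝ) : ℂ) := by
  simp [mul_apply, mul_conj]

theorem conjTranspose_mul_apply_self {κ χ : Type*} [Fintype κ] (M : Matrix κ χ ℂ) (x : χ) :
    (Mᴴ * M) x x = ((∑ k, normSq (M k x) : ℝ) : ℂ) := by
  simp [mul_apply, mul_comm (starRingEnd ℂ _), mul_conj]

theorem mul_diagonal_mul_conjTranspose_apply_self {κ ι : Type*} [Fintype ι] [DecidableEq ι]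
    (N : Matrix κ ι ℂ) (d : ι → ℝ) (k : κ) :
    (N * diagonal (fun i => (d i : ℂ)) * Nᴴ) k k = ((∑ i, normSq (N k i) * d i : ℝ) : ℂ) := by
  rw [mul_apply]
  simp only [mul_diagonal, conjTranspose_apply, star_def]
  push_cast
  exact sum_congr rfl fun i _ => by rw [mul_right_comm, mul_conj]

theorem normSq_mem_doublyStochastic {ι : Type*} [Fintype ι] [DecidableEq ι]
    {U : Matrix ι ι ℂ} (hU : U ∈ unitaryGroup ι ℂ) :
    of (fun i j => normSq (U i j)) ∈ doublyStochastic ℝ ι := by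
  refine mem_doublyStochastic_iff_sum.2 ⟨fun _ _ => normSq_nonneg _, fun i => ?_, fun j => ?_⟩
  · have h := mul_conjTranspose_apply_self U i
    rw [← star_eq_conjTranspose, mem_unitaryGroup_iff.mp hU, one_apply_eq] at h
    exact_mod_cast h.symm
  · have h := conjTranspose_mul_apply_self U j
    rw [← star_eq_conjTranspose, mem_unitaryGroup_iff'.mp hU, one_apply_eq] at h
    exact_mod_cast h.symm

theorem re_apply_self_le_one_of_mul_self_eq {χ : Type*} [Fintype χ] {P : Matrix χ χ ℂ}
    (hP : P.IsHermitian) (hPP : P * P = P) (x : χ) : (P x x).re ≤ 1 := by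
  have hsum : P x x = ((∑ y, normSq (P x y) : ℝ) : ℂ) := by
    rw [← mul_conjTranspose_apply_self, hP.eq, hPP]
  have hle : normSq (P x x) ≤ ∑ y, normSq (P x y) :=
    single_le_sum (fun y _ => normSq_nonneg _) (mem_univ x)
  rw [hsum, normSq_ofReal] at hle
  rw [hsum, ofReal_re]
  nlinarith [sum_nonneg fun y (_ : y ∈ univ) => normSq_nonneg (P x y)]

/-- `Mᴴ D⁺ M` is an orthogonal projection, where `D⁺` is the pseudo-inverse of the diagonal
matrix `M Mᴴ`; the junk value `0⁻¹ = 0` makes `(r k)⁻¹` exactly that pseudo-inverse. -/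
theorem sum_normSq_div_le_one_of_isDiag {κ χ : Type*} [Fintype κ] [Fintype χ] [DecidableEq κ]
    {M : Matrix κ χ ℂ} (hM : (M * Mᴴ).IsDiag) (x : χ) :
    ∑ k, normSq (M k x) / ∑ y, normSq (M k y) ≤ 1 := by
  set r : κ → ℂ := fun k => ((∑ y, normSq (M k y) : ℝ) : ℂ)
  have hMM : M * Mᴴ = diagonal r := by
    rw [← hM.diagonal_diag]; congr 1; funext k; exact mul_conjTranspose_apply_self M k
  set P := Mᴴ * diagonal (fun k => (r k)⁻¹) * M with hPdef
  have hP : P.IsHermitian := isHermitian_conjTranspose_mul_mul M <|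
    isHermitian_diagonal_of_self_adjoint _ <| by ext k; simp [r]
  have hPP : P * P = P :=
    calc P * P = Mᴴ * (diagonal (fun k => (r k)⁻¹) * (M * Mᴴ) *
          diagonal (fun k => (r k)⁻¹)) * M := by
          simp only [P, Matrix.mul_assoc]
      _ = P := by
          rw [hMM, diagonal_mul_diagonal, diagonal_mul_diagonal]
          simp only [inv_mul_inv_mul_self, P]
  have hPx : (P x x).re = ∑ k, normSq (M k x) / ∑ y, normSq (M k y) := by
    rw [hPdef, mul_apply, re_sum]
    simp only [mul_diagonal, conjTranspose_apply]
    refine sum_congr rfl fun k _ => ?_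
    simp only [r]
    rw [mul_right_comm, star_def, ← normSq_eq_conj_mul_self, ← ofReal_inv, ← ofReal_mul,
      ofReal_re, div_eq_mul_inv]
  exact hPx ▸ re_apply_self_le_one_of_mul_self_eq hP hPP x

theorem sum_negMulLog_rowNorm_le_sum_negMulLog_colNorm {κ χ : Type*} [Fintype κ] [Fintype χ]
    [DecidableEq κ] {M : Matrix κ χ ℂ} (hM : (M * Mᴴ).IsDiag) :
    ∑ k, negMulLog (∑ x, normSq (M k x)) ≤ ∑ x, negMulLog (∑ k, normSq (M k x)) :=
  sum_negMulLog_rowSum_le_sum_negMulLog_colSum (fun _ _ => normSq_nonneg _)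
    (sum_normSq_div_le_one_of_isDiag hM)

namespace Matrix.IsHermitian

variable {ι : Type*} [Fintype ι] [DecidableEq ι] {A : Matrix ι ι ℂ}

theorem star_eigenvectorUnitary_mul_mul_eigenvectorUnitary (hA : A.IsHermitian) :
    star (hA.eigenvectorUnitary : Matrix ι ι ℂ) * A * hA.eigenvectorUnitary =
      diagonal (fun i => (hA.eigenvalues i : ℂ)) := by
  rw [← Unitary.conjStarAlgAut_star_apply (S := ℂ), hA.conjStarAlgAut_star_eigenvectorUnitary]
  rfl

theorem sum_negMulLog_eigenvalues_le {χ : Type*} [Fintype χ] (hA : A.IsHermitian)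
    {K : Matrix ι χ ℂ} (hK : A = K * Kᴴ) :
    ∑ i, negMulLog (hA.eigenvalues i) ≤ ∑ x, negMulLog (∑ k, normSq (K k x)) := by
  set U : Matrix ι ι ℂ := (hA.eigenvectorUnitary : Matrix ι ι ℂ)
  set M := star U * K
  have hMM : M * Mᴴ = diagonal (fun i => (hA.eigenvalues i : ℂ)) :=
    calc M * Mᴴ = star U * (K * Kᴴ) * U := by
          simp only [M, conjTranspose_mul, ← star_eq_conjTranspose (star U), star_star,
            Matrix.mul_assoc]
      _ = _ := hK ▸ hA.star_eigenvectorUnitary_mul_mul_eigenvectorUnitary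
  have hrow : ∀ i, ∑ x, normSq (M i x) = hA.eigenvalues i := fun i => by
    have h := mul_conjTranspose_apply_self M i
    rw [hMM, diagonal_apply_eq] at h
    exact_mod_cast h.symm
  have hcol : ∀ x, ∑ k, normSq (M k x) = ∑ k, normSq (K k x) := fun x => by
    have h : Mᴴ * M = Kᴴ * K := by
      rw [conjTranspose_mul, ← star_eq_conjTranspose (star U), star_star, Matrix.mul_assoc,
        ← Matrix.mul_assoc U, mem_unitaryGroup_iff.mp hA.eigenvectorUnitary.2, Matrix.one_mul]
    have h' := congrFun (congrFun h x) x
    rw [conjTranspose_mul_apply_self, conjTranspose_mul_apply_self] at h'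
    exact_mod_cast h'
  have := sum_negMulLog_rowNorm_le_sum_negMulLog_colNorm (hMM ▸ isDiag_diagonal _)
  simp only [hrow, hcol] at this
  exact this

end Matrix.IsHermitian

namespace Matrix.PosSemidef

variable {ι : Type*} [Fintype ι] [DecidableEq ι] {A : Matrix ι ι ℂ}

theorem sum_negMulLog_eigenvalues_le_sum_negMulLog_diag (hA : A.PosSemidef)
    {U : Matrix ι ι ℂ} (hU : U ∈ unitaryGroup ι ℂ) :
    ∑ i, negMulLog (hA.isHermitian.eigenvalues i) ≤
      ∑ k, negMulLog ((star U * A * U) k k).re := by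
  set V : Matrix ι ι ℂ := (hA.isHermitian.eigenvectorUnitary : Matrix ι ι ℂ)
  set N := star U * V
  have hN : N ∈ unitaryGroup ι ℂ :=
    mul_mem (Unitary.star_mem hU) hA.isHermitian.eigenvectorUnitary.2
  have hdiag : ∀ k, ((star U * A * U) k k).re =
      (of (fun k i => normSq (N k i)) *ᵥ hA.isHermitian.eigenvalues) k := fun k => by
    have hA' : star U * A * U =
        N * diagonal (fun i => (hA.isHermitian.eigenvalues i : ℂ)) * Nᴴ := by
      conv_lhs => rw [hA.isHermitian.spectral_theorem]
      simp only [N, V, Unitary.conjStarAlgAut_apply, Matrix.mul_assoc, star_eq_conjTranspose,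
        conjTranspose_mul, conjTranspose_conjTranspose]
      rfl
    rw [hA', mul_diagonal_mul_conjTranspose_apply_self, ofReal_re]
    rfl
  simpa only [hdiag] using
    sum_negMulLog_le_sum_negMulLog_mulVec (normSq_mem_doublyStochastic hN) hA.eigenvalues_nonneg

theorem exists_smul_eq_mul_conjTranspose (hA : A.PosSemidef) {a : ℝ} (ha : 0 ≤ a) :
    ∃ K : Matrix ι ι ℂ, (a : ℂ) • A = K * Kᴴ ∧
      ∀ i, ∑ k, normSq (K k i) = a * hA.isHermitian.eigenvalues i := by
  set V : Matrix ι ι ℂ := (hA.isHermitian.eigenvectorUnitary : Matrix ι ι ℂ)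
  set p := hA.isHermitian.eigenvalues
  have hap : ∀ i, 0 ≤ a * p i := fun i => mul_nonneg ha (hA.eigenvalues_nonneg i)
  refine ⟨V * diagonal (fun i => (√(a * p i) : ℂ)), ?_, fun i => ?_⟩
  · conv_lhs => rw [hA.isHermitian.spectral_theorem]
    rw [conjTranspose_mul, diagonal_conjTranspose, Matrix.mul_assoc,
      ← Matrix.mul_assoc (diagonal _), diagonal_mul_diagonal, Unitary.conjStarAlgAut_apply,
      ← smul_mul_assoc, ← mul_smul_comm, ← diagonal_smul, ← star_eq_conjTranspose,
      Matrix.mul_assoc]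
    congr 3
    funext i
    simp [p, ← ofReal_mul, Real.mul_self_sqrt (hap i)]
  · simp only [mul_diagonal, normSq_mul, normSq_ofReal, Real.mul_self_sqrt (hap i), ← sum_mul]
    have hV := sum_col_of_mem_doublyStochastic
      (normSq_mem_doublyStochastic hA.isHermitian.eigenvectorUnitary.2) i
    simp only [of_apply] at hV
    rw [hV, one_mul]

end Matrix.PosSemidef

theorem IsDensity.sum_eigenvalues {ι : Type*} [Fintype ι] [DecidableEq ι] {A : Matrix ι ι ℂ}
    (hA : IsDensity A) : ∑ i, hA.1.isHermitian.eigenvalues i = 1 := by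
  apply ofReal_injective
  push_cast
  exact hA.1.isHermitian.trace_eq_sum_eigenvalues.symm.trans hA.2

theorem binEnt_eq (x : ℝ) : binEnt x = (negMulLog x + negMulLog (1 - x)) / Real.log 2 := by
  rw [binEnt, logb, logb, negMulLog, negMulLog]
  ring

section Entropy

variable {ι : Type*} [Fintype ι] [DecidableEq ι]

theorem vnEnt_eq_sum_negMulLog {A : Matrix ι ι ℂ} (hA : A.IsHermitian) :
    vnEnt A = (∑ i, negMulLog (hA.eigenvalues i)) / Real.log 2 := by
  set U : Matrix ι ι ℂ := (hA.eigenvectorUnitary : Matrix ι ι ℂ)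
  have htr : (A * matLog A).trace =
      ((∑ i, hA.eigenvalues i * logb 2 (hA.eigenvalues i) : ℝ) : ℂ) := by
    rw [matLog, dif_pos hA]
    nth_rw 1 [hA.spectral_theorem]
    rw [Unitary.conjStarAlgAut_apply]
    calc _ = (U * (diagonal (fun i => (hA.eigenvalues i : ℂ)) * (star U * U) *
          diagonal (fun i => (logb 2 (hA.eigenvalues i) : ℂ))) * star U).trace := by
          simp only [U, Matrix.mul_assoc]; rfl
      _ = _ := by
          rw [trace_mul_cycle, ← Matrix.mul_assoc,
            mem_unitaryGroup_iff'.mp hA.eigenvectorUnitary.2]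
          simp [diagonal_mul_diagonal, trace_diagonal]
  rw [vnEnt, htr, ofReal_re, sum_div, ← sum_neg_distrib]
  exact sum_congr rfl fun i _ => by rw [negMulLog, logb]; ring

theorem relEnt_smul_add_smul_self (a b : ℝ) (A B : Matrix ι ι ℂ) :
    relEnt ((a : ℂ) • A + (b : ℂ) • B) B =
      a * relEnt A B - (vnEnt ((a : ℂ) • A + (b : ℂ) • B) - a * vnEnt A - b * vnEnt B) := by
  simp only [relEnt, vnEnt, Matrix.mul_sub, Matrix.add_mul, smul_mul, trace_sub, trace_add,
    trace_smul, smul_eq_mul, sub_re, add_re, re_ofReal_mul]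
  ring

theorem mul_vnEnt_add_mul_vnEnt_le {A B : Matrix ι ι ℂ} (hA : A.PosSemidef)
    (hB : B.PosSemidef) {a b : ℝ} (ha : 0 ≤ a) (hb : 0 ≤ b) (hab : a + b = 1) :
    a * vnEnt A + b * vnEnt B ≤ vnEnt ((a : ℂ) • A + (b : ℂ) • B) := by
  have hT : ((a : ℂ) • A + (b : ℂ) • B).PosSemidef :=
    (hA.smul (by exact_mod_cast ha)).add (hB.smul (by exact_mod_cast hb))
  set U : Matrix ι ι ℂ := (hT.isHermitian.eigenvectorUnitary : Matrix ι ι ℂ)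
  have hU : U ∈ unitaryGroup ι ℂ := hT.isHermitian.eigenvectorUnitary.2
  set α := fun k => ((star U * A * U) k k).re
  set β := fun k => ((star U * B * U) k k).re
  have hr : ∀ k, hT.isHermitian.eigenvalues k = a * α k + b * β k := fun k => by
    have h := congrFun (congrFun
      hT.isHermitian.star_eigenvectorUnitary_mul_mul_eigenvectorUnitary k) k
    simp only [Matrix.mul_add, Matrix.add_mul, Matrix.mul_smul, Matrix.smul_mul,
      Matrix.add_apply, Matrix.smul_apply, diagonal_apply_eq] at h
    simpa [α, β] using congrArg re h.symm
  have hdiag : ∀ {C : Matrix ι ι ℂ}, C.PosSemidef → ∀ k, 0 ≤ ((star U * C * U) k k).re :=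
    fun hC k => (Complex.le_def.1 ((hC.conjTranspose_mul_mul_same U).diag_nonneg (i := k))).1
  have hη : ∀ k, a * negMulLog (α k) + b * negMulLog (β k) ≤
      negMulLog (hT.isHermitian.eigenvalues k) := fun k =>
    hr k ▸ concaveOn_negMulLog.2 (hdiag hA k) (hdiag hB k) ha hb hab
  have key : a * ∑ i, negMulLog (hA.isHermitian.eigenvalues i) +
      b * ∑ i, negMulLog (hB.isHermitian.eigenvalues i) ≤
      ∑ i, negMulLog (hT.isHermitian.eigenvalues i) :=
    calc _ ≤ a * ∑ k, negMulLog (α k) + b * ∑ k, negMulLog (β k) := add_le_add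
          (mul_le_mul_of_nonneg_left (hA.sum_negMulLog_eigenvalues_le_sum_negMulLog_diag hU) ha)
          (mul_le_mul_of_nonneg_left (hB.sum_negMulLog_eigenvalues_le_sum_negMulLog_diag hU) hb)
      _ ≤ _ := by
          rw [mul_sum, mul_sum, ← sum_add_distrib]
          exact sum_le_sum fun k _ => hη k
  rw [vnEnt_eq_sum_negMulLog hA.isHermitian, vnEnt_eq_sum_negMulLog hB.isHermitian,
    vnEnt_eq_sum_negMulLog hT.isHermitian, mul_div_assoc', mul_div_assoc', ← add_div]
  exact div_le_div_of_nonneg_right key (log_pos one_lt_two).le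

theorem vnEnt_smul_add_smul_le {A B : Matrix ι ι ℂ} (hA : IsDensity A) (hB : IsDensity B)
    {a b : ℝ} (ha : 0 ≤ a) (hb : 0 ≤ b) :
    vnEnt ((a : ℂ) • A + (b : ℂ) • B) ≤
      a * vnEnt A + b * vnEnt B + (negMulLog a + negMulLog b) / Real.log 2 := by
  obtain ⟨K, hK, hKcol⟩ := hA.1.exists_smul_eq_mul_conjTranspose ha
  obtain ⟨L, hL, hLcol⟩ := hB.1.exists_smul_eq_mul_conjTranspose hb
  have hKL : (a : ℂ) • A + (b : ℂ) • B = fromCols K L * (fromCols K L)ᴴ := by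
    rw [conjTranspose_fromCols_eq_fromRows_conjTranspose, fromCols_mul_fromRows, hK, hL]
  have hT : ((a : ℂ) • A + (b : ℂ) • B).IsHermitian :=
    hKL ▸ isHermitian_mul_conjTranspose_self _
  have key := hT.sum_negMulLog_eigenvalues_le hKL
  simp only [Fintype.sum_sum_type, fromCols_apply_inl, fromCols_apply_inr, hKcol, hLcol,
    sum_negMulLog_mul_of_sum_eq_one hA.sum_eigenvalues,
    sum_negMulLog_mul_of_sum_eq_one hB.sum_eigenvalues] at key
  rw [vnEnt_eq_sum_negMulLog hA.1.isHermitian, vnEnt_eq_sum_negMulLog hB.1.isHermitian,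
    vnEnt_eq_sum_negMulLog hT, mul_div_assoc', mul_div_assoc', ← add_div, ← add_div]
  exact div_le_div_of_nonneg_right (by linarith) (log_pos one_lt_two).le

end Entropy

theorem relEnt_dilution_general {ι : Type*} [Fintype ι] [DecidableEq ι]
    (ρ σ : Matrix ι ι ℂ) (hρ : IsDensity ρ) (hσ : IsDensity σ)
    (t : ℝ) (ht0 : 0 ≤ t) (ht1 : t ≤ 1) :
    ∃ α : ℝ, 0 ≤ α ∧ α ≤ binEnt t ∧
      relEnt ((t : ℂ) • ρ + ((1 - t : ℝ) : ℂ) • σ) σ = t * relEnt ρ σ - α := by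
  have ht1' : 0 ≤ 1 - t := sub_nonneg.2 ht1
  refine ⟨vnEnt ((t : ℂ) • ρ + ((1 - t : ℝ) : ℂ) • σ) - t * vnEnt ρ - (1 - t) * vnEnt σ,
    ?_, ?_, relEnt_smul_add_smul_self t (1 - t) ρ σ⟩
  · linarith [mul_vnEnt_add_mul_vnEnt_le hρ.1 hσ.1 ht0 ht1' (add_sub_cancel t 1)]
  · linarith [vnEnt_smul_add_smul_le hρ hσ ht0 ht1', binEnt_eq t]

/-- Dilution of relative entropy:
`D(λρ + (1−λ)σ ‖ σ) = λ D(ρ‖σ) − α` for some `0 ≤ α ≤ H₂(λ)`. -/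
theorem relEnt_dilution {ι : Type*} [Fintype ι] [DecidableEq ι]
    (ρ σ : Matrix ι ι ℂ) (hρ : IsDensity ρ) (hσ : IsDensity σ)
    (hsupp : SuppLE ρ σ) (t : ℝ) (ht0 : 0 ≤ t) (ht1 : t ≤ 1) :
    ∃ α : ℝ, 0 ≤ α ∧ α ≤ binEnt t ∧
      relEnt ((t : ℂ) • ρ + ((1 - t : ℝ) : ℂ) • σ) σ = t * relEnt ρ σ - α :=
  relEnt_dilution_general ρ σ hρ hσ t ht0 ht1
end

section
/- The indicator vector of an up-set spans an extremal ray of the monotonicity cone: if U is an up-set of nonempty subsets of [n] with indicator vector u, and a, b ∈ Λ_n satisfy a + b = cu for some c > 0, then a and b are each nonnegative scalar multiples of u. -/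
/-- The nonempty subsets of `[n] = {1,…,n}` (modelled as `Fin n`). -/
abbrev NES (n : ℕ) := {S : Finset (Fin n) // S.Nonempty}

/-- The Lindblad–Uhlmann monotonicity cone `Λ_n`: vectors indexed by the
nonempty subsets of `[n]`, monotone under set inclusion and nonnegative. -/
def Lam (n : ℕ) : Set (NES n → ℝ) :=
  {v | (∀ S T : NES n, T.1 ⊆ S.1 → v T ≤ v S) ∧ ∀ S : NES n, 0 ≤ v S}

/-- An up-set (upward-closed family) of nonempty subsets of `[n]`. -/
def IsUpSet {n : ℕ} (U : Set (NES n)) : Prop :=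
  ∀ S T : NES n, S ∈ U → S.1 ⊆ T.1 → T ∈ U

/-- The 0/1 indicator vector of a family of nonempty subsets. -/
noncomputable def indFn {n : ℕ} (U : Set (NES n)) : NES n → ℝ :=
  U.indicator 1

/-- The indicator vector of an up-set spans an extremal ray of `Λ_n`. -/
theorem indicator_extremal {n : ℕ} (U : Set (NES n)) (hne : U.Nonempty)
    (hU : IsUpSet U) (a b : NES n → ℝ) (ha : a ∈ Lam n) (hb : b ∈ Lam n)
    (c : ℝ) (hc : 0 < c) (hab : a + b = c • indFn U) :
    ∃ s t : ℝ, 0 ≤ s ∧ 0 ≤ t ∧ a = s • indFn U ∧ b = t • indFn U := by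
  obtain ⟨S₀, hS₀⟩ := hne
  have hsumU : ∀ S : NES n, S ∈ U → a S + b S = c := by
    intro S hS
    have := congrFun hab S
    simpa [indFn, Set.indicator_of_mem hS] using this
  have hzero : ∀ S : NES n, S ∉ U → a S = 0 ∧ b S = 0 := by
    intro S hS
    have h := congrFun hab S
    simp only [Pi.add_apply, Pi.smul_apply, indFn, Set.indicator_of_notMem hS,
      smul_eq_mul, mul_zero] at h
    constructor <;> linarith [ha.2 S, hb.2 S]
  have hconst : ∀ S : NES n, S ∈ U → a S = a S₀ := by
    intro S hS
    set W : NES n := ⟨S.1 ∪ S₀.1, S.2.mono Finset.subset_union_left⟩ with hW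
    have hWU : W ∈ U := hU S W hS Finset.subset_union_left
    have h1 : a S ≤ a W := ha.1 W S Finset.subset_union_left
    have h2 : b S ≤ b W := hb.1 W S Finset.subset_union_left
    have h3 : a S₀ ≤ a W := ha.1 W S₀ Finset.subset_union_right
    have h4 : b S₀ ≤ b W := hb.1 W S₀ Finset.subset_union_right
    have e1 := hsumU S hS
    have e2 := hsumU W hWU
    have e3 := hsumU S₀ hS₀
    linarith
  refine ⟨a S₀, b S₀, ha.2 S₀, hb.2 S₀, ?_, ?_⟩ <;> funext S <;>
    by_cases hS : S ∈ U <;>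
    simp only [Pi.smul_apply, indFn, Set.indicator_of_mem, Set.indicator_of_notMem,
      hS, not_false_iff, smul_eq_mul, mul_zero, Pi.one_apply, mul_one]
  · exact hconst S hS
  · exact (hzero S hS).1
  · have := hconst S hS
    have e1 := hsumU S hS
    have e3 := hsumU S₀ hS₀
    linarith
  · exact (hzero S hS).2
end

section
/- Every vector spanning an extremal ray of the monotonicity cone Λ_n is a positive multiple of the indicator vector of some up-set: if v ∈ Λ_n is nonzero and generates an extremal ray (whenever a, b ∈ Λ_n and a + b = v, both a and b are scalar multiples of v), then there exist c > 0 and an up-set U of nonempty subsets of [n] such that v_S = c for S ∈ U and v_S = 0 for S ∉ U. -/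
namespace Lam

variable {n : ℕ} {v : NES n → ℝ}

theorem mem_iff : v ∈ Lam n ↔ Monotone v ∧ 0 ≤ v :=
  ⟨fun h => ⟨fun _ _ hST => h.1 _ _ hST, h.2⟩, fun h => ⟨fun _ _ hTS => h.1 hTS, h.2⟩⟩

theorem min_const_mem (hv : v ∈ Lam n) {t : ℝ} (ht : 0 ≤ t) : (fun S => min (v S) t) ∈ Lam n :=
  mem_iff.2 ⟨(mem_iff.1 hv).1.min monotone_const, fun S => le_min (hv.2 S) ht⟩

theorem max_const_sub_mem (hv : v ∈ Lam n) (t : ℝ) : (fun S => max (v S) t - t) ∈ Lam n :=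
  mem_iff.2 ⟨fun _ _ hST => sub_le_sub_right (max_le_max_right t ((mem_iff.1 hv).1 hST)) t,
    fun _ => sub_nonneg.2 (le_max_right _ _)⟩

theorem min_const_add_max_const_sub (t : ℝ) :
    (fun S => min (v S) t) + (fun S => max (v S) t - t) = v := by
  funext S
  simp only [Pi.add_apply, add_sub_assoc', min_add_max, add_sub_cancel_right]

variable (hv : v ∈ Lam n)
  (hext : ∀ a b : NES n → ℝ, a ∈ Lam n → b ∈ Lam n → a + b = v → ∃ s : ℝ, a = s • v)
include hv hext

theorem apply_le_of_pos {T : NES n} (hT : 0 < v T) (S : NES n) : v S ≤ v T := by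
  obtain ⟨s, hs⟩ := hext _ _ (min_const_mem hv hT.le) (max_const_sub_mem hv (v T))
    (min_const_add_max_const_sub (v T))
  have hs_one : s = 1 := by
    have hsT : v T = s * v T := by simpa using congrFun hs T
    exact (mul_eq_right₀ hT.ne').1 hsT.symm
  have hsS : min (v S) (v T) = v S := by simpa [hs_one] using congrFun hs S
  exact min_eq_left_iff.1 hsS

theorem apply_eq_of_pos {S T : NES n} (hS : 0 < v S) (hT : 0 < v T) : v S = v T :=
  (apply_le_of_pos hv hext hT S).antisymm (apply_le_of_pos hv hext hS T)

end Lam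

/-- Every generator of an extremal ray of `Λ_n` is a positive multiple of the
indicator vector of an up-set. -/
theorem extremal_eq_indicator {n : ℕ} (v : NES n → ℝ) (hv : v ∈ Lam n)
    (hne : v ≠ 0)
    (hext : ∀ a b : NES n → ℝ, a ∈ Lam n → b ∈ Lam n → a + b = v →
      (∃ s : ℝ, a = s • v) ∧ ∃ t : ℝ, b = t • v) :
    ∃ c : ℝ, 0 < c ∧ ∃ U : Set (NES n), IsUpSet U ∧
      ∀ S : NES n, (S ∈ U → v S = c) ∧ (S ∉ U → v S = 0) := by
  have hext' := fun a b ha hb hab => (hext a b ha hb hab).1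
  obtain ⟨T, hT⟩ := Function.ne_iff.1 hne
  have hT_pos : 0 < v T := (hv.2 T).lt_of_ne' hT
  refine ⟨v T, hT_pos, {S | 0 < v S}, ?_, fun S => ⟨?_, ?_⟩⟩
  · exact fun S S' hS hSS' => hS.trans_le (hv.1 S' S hSS')
  · exact fun hS => Lam.apply_eq_of_pos hv hext' hS hT_pos
  · exact fun hS => (not_lt.1 hS).antisymm (hv.2 S)
end

section
/- Shamir (n,k)-threshold scheme correctness: over the field GF(p) with p > n prime, let s ∈ GF(p) and let a₁,…,a_{k−1} be chosen uniformly and independently in GF(p), defining y(x) = s + a₁x + ⋯ + a_{k−1}x^{k−1} and shares D_i = y(i) for i = 1,…,n. Then any k of the pairs (i, D_i) determine s uniquely (via polynomial interpolation), while for any set T of at most k−1 indices, the joint distribution of (D_i)_{i∈T} is the same for every value of the secret s. -/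
/-!
The shares are the values at the points `1, …, n` of `GF(p)` (distinct and nonzero since `n < p`)
of the polynomial of degree `< k` with coefficient vector `a`. Any `k` of them determine that
polynomial by Lagrange interpolation, hence its constant term. For privacy, when `|T| < k` the
normalized nodal polynomial of the points of `T` has degree `< k`, constant term `1`, and vanishes
on `T`; adding `(s' - s)` times its coefficient vector is a bijection of coefficient vectors that
turns secret `s` into `s'` and fixes every share in `T`.
-/

/-- The Shamir share of party `i` (evaluation of the polynomial with
coefficient vector `a` at the point `i + 1` in `GF(p)`). -/
def shamirShare {p k n : ℕ} (a : Fin k → ZMod p) (i : Fin n) : ZMod p :=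
  ∑ j : Fin k, a j * ((i : ZMod p) + 1) ^ (j : ℕ)

open Polynomial Finset

theorem AddMonoidHom.card_fiber_eq_card_fiber_add {V U F : Type*} [AddGroup V] [Fintype V]
    [AddGroup U] [DecidableEq U] [FunLike F V U] [AddMonoidHomClass F V U] (L : F) (y : U) (v : V) :
    #{a | L a = y} = #{a | L a = y + L v} :=
  card_equiv (Equiv.addRight v) fun a => by simp

namespace Polynomial

variable {R : Type*} [CommRing R] {k : ℕ}

theorem eval_degreeLTEquiv_symm (a : Fin k → R) (x : R) :
    eval x ((degreeLTEquiv R k).symm a : R[X]) = ∑ j, a j * x ^ (j : ℕ) := by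
  rw [eval_eq_sum_degreeLTEquiv (Submodule.coe_mem _), Subtype.coe_eta,
    LinearEquiv.apply_symm_apply]

theorem coeff_degreeLTEquiv_symm (a : Fin k → R) (j : Fin k) :
    ((degreeLTEquiv R k).symm a : R[X]).coeff j = a j :=
  congrFun ((degreeLTEquiv R k).apply_symm_apply a) j

theorem exists_natDegree_le_coeff_zero_eq_one_and_eval_eq_zero {F ι : Type*} [Field F]
    (s : Finset ι) (v : ι → F) (hv : ∀ i ∈ s, v i ≠ 0) :
    ∃ f : F[X], f.natDegree ≤ #s ∧ f.coeff 0 = 1 ∧ ∀ i ∈ s, f.eval (v i) = 0 := by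
  have hnodal : (Lagrange.nodal s v).eval 0 ≠ 0 := by
    rw [Lagrange.eval_nodal]
    exact prod_ne_zero_iff.mpr fun i hi => sub_ne_zero.mpr (hv i hi).symm
  refine ⟨C ((Lagrange.nodal s v).eval 0)⁻¹ * Lagrange.nodal s v, ?_, ?_, fun i hi => ?_⟩
  · exact natDegree_C_mul_le _ _ |>.trans Lagrange.natDegree_nodal.le
  · rw [coeff_C_mul, coeff_zero_eq_eval_zero, inv_mul_cancel₀ hnodal]
  · rw [eval_mul, Lagrange.eval_nodal_at_node hi, mul_zero]

end Polynomial

section Shamir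

variable {p n k : ℕ}

theorem shamirShare_eq_eval (a : Fin k → ZMod p) (i : Fin n) :
    shamirShare a i =
      ((degreeLTEquiv (ZMod p) k).symm a : (ZMod p)[X]).eval ((i : ZMod p) + 1) :=
  (eval_degreeLTEquiv_symm a _).symm

theorem natCast_add_one_injective (hpn : n < p) :
    Function.Injective fun i : Fin n => (i : ZMod p) + 1 := by
  intro i j hij
  have hval :=
    congrArg ZMod.val (by push_cast; exact hij : ((i + 1 : ℕ) : ZMod p) = (j + 1 : ℕ))
  rw [ZMod.val_natCast_of_lt (by omega), ZMod.val_natCast_of_lt (by omega)] at hval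
  exact Fin.ext (by omega)

theorem natCast_add_one_ne_zero (hpn : n < p) (i : Fin n) : (i : ZMod p) + 1 ≠ 0 := by
  intro hi
  have hval := congrArg ZMod.val (by push_cast; exact hi : ((i + 1 : ℕ) : ZMod p) = 0)
  rw [ZMod.val_natCast_of_lt (by omega), ZMod.val_zero] at hval
  omega

def secretAndShares (j₀ : Fin k) (T : Finset (Fin n)) :
    (Fin k → ZMod p) →ₗ[ZMod p] ZMod p × (T → ZMod p) where
  toFun a := (a j₀, fun i => shamirShare a i.1)
  map_add' a b := by
    ext <;> simp [shamirShare, add_mul, sum_add_distrib]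
  map_smul' r a := by
    ext <;> simp [shamirShare, mul_sum, mul_assoc]

variable [Fact p.Prime]

theorem exists_recover_secret_of_card_eq (hpn : n < p) (hk : 0 < k) (T : Finset (Fin n))
    (hT : #T = k) :
    ∃ g : (T → ZMod p) → ZMod p,
      ∀ a : Fin k → ZMod p, g (fun i => shamirShare a i.1) = a ⟨0, hk⟩ := by
  let v : T → ZMod p := fun i => (i.1 : ZMod p) + 1
  have hv : Set.InjOn v ↑(univ : Finset T) :=
    ((natCast_add_one_injective hpn).comp Subtype.val_injective).injOn
  refine ⟨fun w => (Lagrange.interpolate univ v w).coeff 0, fun a => ?_⟩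
  set f := ((degreeLTEquiv (ZMod p) k).symm a : (ZMod p)[X])
  have hf : f.degree < #(univ : Finset T) := by
    rw [card_univ, Fintype.card_coe, hT]
    exact mem_degreeLT.mp (Submodule.coe_mem _)
  simp only [shamirShare_eq_eval]
  rw [← Lagrange.eq_interpolate hv hf]
  exact coeff_degreeLTEquiv_symm a ⟨0, hk⟩

theorem card_filter_secret_shares_eq_of_card_le (hpn : n < p) (hk : 0 < k) (T : Finset (Fin n))
    (hT : #T ≤ k - 1) (s s' : ZMod p) (w : T → ZMod p) :
    #{a : Fin k → ZMod p | a ⟨0, hk⟩ = s ∧ ∀ i : T, shamirShare a i.1 = w i} =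
      #{a : Fin k → ZMod p | a ⟨0, hk⟩ = s' ∧ ∀ i : T, shamirShare a i.1 = w i} := by
  obtain ⟨f, hf_deg, hf_zero, hf_root⟩ :=
    exists_natDegree_le_coeff_zero_eq_one_and_eval_eq_zero T (fun i : Fin n => (i : ZMod p) + 1)
      fun i _ => natCast_add_one_ne_zero hpn i
  have hf : f ∈ degreeLT (ZMod p) k := by
    rw [mem_degreeLT]
    exact degree_le_natDegree.trans_lt (by exact_mod_cast (by omega : f.natDegree < k))
  set c := degreeLTEquiv (ZMod p) k ⟨f, hf⟩
  set L := secretAndShares ⟨0, hk⟩ T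
  have hc : L c = (1, 0) := by
    ext i
    · exact hf_zero
    · simp [L, secretAndShares, shamirShare_eq_eval, c, hf_root i.1 i.2]
  have key := AddMonoidHom.card_fiber_eq_card_fiber_add L (s, w) ((s' - s) • c)
  rw [map_smul, hc] at key
  convert key using 4 <;> simp [L, secretAndShares, Prod.ext_iff, funext_iff]

end Shamir

/-- Correctness and privacy of Shamir's `(n,k)`-threshold secret sharing
scheme over `GF(p)` with `p > n` prime: any `k` shares (with their indices)
determine the secret `a ⟨0, hk⟩` (the constant term) uniquely; for any set
`T` of at most `k − 1` indices, the joint distribution of the shares in `T`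
(counted over the uniformly random choice of the remaining coefficients) is
the same for every value of the secret. -/
theorem shamir_threshold (p n k : ℕ) [Fact p.Prime] (hpn : n < p)
    (hk : 0 < k) :
    (∀ T : Finset (Fin n), T.card = k →
      ∃ g : ({i : Fin n // i ∈ T} → ZMod p) → ZMod p,
        ∀ a : Fin k → ZMod p, g (fun i => shamirShare a i.1) = a ⟨0, hk⟩) ∧
    (∀ T : Finset (Fin n), T.card ≤ k - 1 →
      ∀ s s' : ZMod p, ∀ w : {i : Fin n // i ∈ T} → ZMod p,
        (Finset.univ.filter fun a : Fin k → ZMod p =>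
            a ⟨0, hk⟩ = s ∧
              ∀ i : {i : Fin n // i ∈ T}, shamirShare a i.1 = w i).card =
        (Finset.univ.filter fun a : Fin k → ZMod p =>
            a ⟨0, hk⟩ = s' ∧
              ∀ i : {i : Fin n // i ∈ T}, shamirShare a i.1 = w i).card) :=
  ⟨fun T hT => exists_recover_secret_of_card_eq hpn hk T hT,
    fun T hT s s' w => card_filter_secret_shares_eq_of_card_le hpn hk T hT s s' w⟩
end

section
/- Privacy of Shamir's scheme follows from interpolation: for any prime p, secret s ∈ GF(p), and any set T of at most k−1 distinct nonzero evaluation points, the map sending a uniformly random polynomial of degree < k with constant term s to its tuple of evaluations at T is uniform over GF(p)^T. -/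
open Finset

section Aux

variable (p k : ℕ) [Fact p.Prime] (hk : 0 < k) (T : Finset (ZMod p))

/-- The evaluation linear map: coefficients ↦ (constant term, evaluations at T). -/
noncomputable def shamirL :
    (Fin k → ZMod p) →ₗ[ZMod p] (ZMod p) × ({t : ZMod p // t ∈ T} → ZMod p) where
  toFun a := (a ⟨0, hk⟩, fun t => ∑ j : Fin k, a j * t.1 ^ (j : ℕ))
  map_add' a b := by
    ext t <;> simp [add_mul, Finset.sum_add_distrib]
  map_smul' c a := by
    ext t <;> simp [Finset.mul_sum, mul_assoc]

theorem shamirL_surjective (h0 : (0 : ZMod p) ∉ T) (hT : T.card ≤ k - 1) :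
    Function.Surjective (shamirL p k hk T) := by
  classical
  rintro ⟨c, w⟩
  set N : Finset (ZMod p) := insert 0 T with hN
  have hcard : N.card = T.card + 1 := Finset.card_insert_of_notMem h0
  have hNk : N.card ≤ k := by omega
  set v : ZMod p → ZMod p := fun x => if h : x ∈ T then w ⟨x, h⟩ else c with hv
  have hinj : Set.InjOn (id : ZMod p → ZMod p) N := Function.injective_id.injOn
  set P : Polynomial (ZMod p) := Lagrange.interpolate N id v with hP
  have hdeg : P.natDegree < k := by
    by_cases hz : P = 0
    · simp [hz, hk]
    · have := Lagrange.degree_interpolate_lt v hinj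
      have h2 : P.degree < (k : ℕ) := lt_of_lt_of_le this (by exact_mod_cast hNk)
      exact (Polynomial.natDegree_lt_iff_degree_lt hz).2 h2
  have heval : ∀ x ∈ N, P.eval x = v x := fun x hx =>
    Lagrange.eval_interpolate_at_node v hinj hx
  refine ⟨fun j => P.coeff j, ?_⟩
  have hsum : ∀ x : ZMod p, ∑ j : Fin k, P.coeff j * x ^ (j : ℕ) = P.eval x := by
    intro x
    rw [Polynomial.eval_eq_sum_range' (lt_of_lt_of_le hdeg (le_refl k)) x,
      ← Fin.sum_univ_eq_sum_range]
  have h0N : (0 : ZMod p) ∈ N := Finset.mem_insert_self 0 T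
  refine Prod.ext ?_ ?_
  · show P.coeff 0 = c
    have := heval 0 h0N
    rw [← Polynomial.coeff_zero_eq_eval_zero] at this
    rw [this, hv]
    simp [h0]
  · funext t
    show (∑ j : Fin k, P.coeff j * t.1 ^ (j : ℕ)) = w t
    rw [hsum, heval t.1 (Finset.mem_insert_of_mem t.2), hv]
    simp [t.2]

end Aux

/-- Privacy of Shamir's scheme from interpolation: for any set `T` of at most
`k − 1` distinct nonzero evaluation points, the map sending a uniformly random
polynomial of degree `< k` with constant term `s` to its tuple of evaluations
at `T` is uniform: every tuple has exactly `p^(k−1−|T|)` preimages. -/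
theorem shamir_privacy_uniform (p k : ℕ) [Fact p.Prime] (hk : 0 < k)
    (T : Finset (ZMod p)) (h0 : (0 : ZMod p) ∉ T) (hT : T.card ≤ k - 1)
    (s : ZMod p) (w : {t : ZMod p // t ∈ T} → ZMod p) :
    (Finset.univ.filter fun a : Fin k → ZMod p =>
        a ⟨0, hk⟩ = s ∧ ∀ t : {t : ZMod p // t ∈ T},
          ∑ j : Fin k, a j * t.1 ^ (j : ℕ) = w t).card =
      p ^ (k - 1 - T.card) := by
  classical
  set L := shamirL p k hk T with hL
  have hsurj := shamirL_surjective p k hk T h0 hT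
  -- every fiber is equivalent to the kernel
  have fiberEquiv : ∀ y, {a : Fin k → ZMod p // L a = y} ≃ (LinearMap.ker L) := by
    intro y
    have ha₀ : L (hsurj y).choose = y := (hsurj y).choose_spec
    set a₀ := (hsurj y).choose
    refine ⟨fun a => ⟨a.1 - a₀, ?_⟩, fun b => ⟨b.1 + a₀, ?_⟩, ?_, ?_⟩
    · simp [LinearMap.mem_ker, map_sub, a.2, ha₀]
    · have := b.2
      simp [LinearMap.mem_ker] at this
      simp [map_add, this, ha₀]
    · intro a; ext; simp
    · intro b; ext; simp
  have hcardfib : ∀ y, Fintype.card {a : Fin k → ZMod p // L a = y}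
      = Fintype.card (LinearMap.ker L) := fun y => Fintype.card_congr (fiberEquiv y)
  -- total count
  have htotal : Fintype.card (Fin k → ZMod p)
      = Fintype.card ((ZMod p) × ({t : ZMod p // t ∈ T} → ZMod p))
        * Fintype.card (LinearMap.ker L) := by
    rw [← Fintype.card_congr (Equiv.sigmaFiberEquiv L)]
    rw [Fintype.card_sigma]
    simp [hcardfib, Finset.sum_const, Finset.card_univ]
  have hpcard : Fintype.card (ZMod p) = p := ZMod.card p
  have h1 : Fintype.card (Fin k → ZMod p) = p ^ k := by
    simp [hpcard]
  have h2 : Fintype.card ((ZMod p) × ({t : ZMod p // t ∈ T} → ZMod p))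
      = p ^ (T.card + 1) := by
    simp [hpcard, Fintype.card_coe, pow_succ, mul_comm]
  have hppos : 0 < p := (Fact.out : p.Prime).pos
  have hker : Fintype.card (LinearMap.ker L) = p ^ (k - 1 - T.card) := by
    have hsplit : p ^ (T.card + 1) * p ^ (k - 1 - T.card) = p ^ k := by
      rw [← pow_add]; congr 1; omega
    have : p ^ (T.card + 1) * Fintype.card (LinearMap.ker L)
        = p ^ (T.card + 1) * p ^ (k - 1 - T.card) := by
      rw [hsplit, ← h1, htotal, h2]
    exact Nat.eq_of_mul_eq_mul_left (pow_pos hppos _) this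
  -- relate the filter to the fiber over (s, w)
  have : (Finset.univ.filter fun a : Fin k → ZMod p =>
        a ⟨0, hk⟩ = s ∧ ∀ t : {t : ZMod p // t ∈ T},
          ∑ j : Fin k, a j * t.1 ^ (j : ℕ) = w t).card
      = Fintype.card {a : Fin k → ZMod p // L a = (s, w)} := by
    rw [Fintype.card_subtype]
    congr 1
    ext a
    simp only [Finset.mem_filter, Finset.mem_univ, true_and]
    constructor
    · rintro ⟨h1', h2'⟩
      exact Prod.ext h1' (funext h2')
    · intro h
      have h1' := congrArg Prod.fst h
      have h2' := congrArg Prod.snd h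
      exact ⟨h1', fun t => congrFun h2' t⟩
  rw [this, hcardfib, hker]
end

section
/- For classical n-party secret sharing with access structure U (an up-set over nonempty subsets of [n]), the pair of diagonal states ρ = ρ(0), σ = ½(ρ(0)+ρ(1)) has relative entropy vector exactly the indicator vector of U: D(ρ^S ‖ σ^S) = 1 for S ∈ U and D(ρ^S ‖ σ^S) = 0 for S ∉ U. -/
/-!
All states involved are diagonal, and the partial trace of a diagonal state is the diagonal state
of the marginal distribution, so `D(ρ^S ‖ σ^S)` is the classical divergence of the `S`-marginal
`p` of `P₀` from the midpoint of `p` and the `S`-marginal `q` of `P₁`. For an authorised `S` the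
supports of `p` and `q` are disjoint, so the midpoint is `p / 2` on the support of `p` and the
divergence is `∑ p = 1`; for an unauthorised `S` we have `p = q`, so the two states coincide.
-/

open Matrix Kronecker
open scoped ComplexOrder

/-- Partial trace of an `n`-party matrix onto the parties in `S`. -/
noncomputable def ptr {n : ℕ} {κ : Fin n → Type*}
    [∀ i, Fintype (κ i)] [∀ i, DecidableEq (κ i)] (S : Finset (Fin n))
    (M : Matrix (∀ i, κ i) (∀ i, κ i) ℂ) :
    Matrix (∀ i : {x : Fin n // x ∈ S}, κ i.1)
           (∀ i : {x : Fin n // x ∈ S}, κ i.1) ℂ :=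
  fun a b => ∑ z : ∀ i : {x : Fin n // x ∉ S}, κ i.1,
    M (fun i => if h : i ∈ S then a ⟨i, h⟩ else z ⟨i, h⟩)
      (fun i => if h : i ∈ S then b ⟨i, h⟩ else z ⟨i, h⟩)

/-- Marginal of a joint probability mass function on the coordinates in `S`. -/
noncomputable def marg {n : ℕ} {κ : Fin n → Type*}
    [∀ i, Fintype (κ i)] [∀ i, DecidableEq (κ i)] (S : Finset (Fin n))
    (P : (∀ i, κ i) → ℝ) : (∀ i : {x : Fin n // x ∈ S}, κ i.1) → ℝ :=
  fun a => ∑ z : ∀ i : {x : Fin n // x ∉ S}, κ i.1,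
    P (fun i => if h : i ∈ S then a ⟨i, h⟩ else z ⟨i, h⟩)

namespace Matrix

variable {𝕜 ι : Type*} [RCLike 𝕜] [Fintype ι] [DecidableEq ι]

lemma IsHermitian.eigenvalues_eq_of_eigenvectorUnitary_ne_zero {d : ι → ℝ}
    (h : (diagonal fun i => (d i : 𝕜)).IsHermitian) {x j : ι}
    (hxj : (h.eigenvectorUnitary : Matrix ι ι 𝕜) x j ≠ 0) : h.eigenvalues j = d x := by
  have hx := congrFun (h.mulVec_eigenvectorBasis j) x
  rw [mulVec_diagonal, Pi.smul_apply, RCLike.real_smul_eq_coe_mul] at hx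
  rw [IsHermitian.eigenvectorUnitary_apply] at hxj
  exact_mod_cast (mul_right_cancel₀ hxj hx).symm

lemma IsHermitian.cfc_diagonal {d : ι → ℝ} (h : (diagonal fun i => (d i : 𝕜)).IsHermitian)
    (f : ℝ → ℝ) : h.cfc f = diagonal fun i => (f (d i) : 𝕜) := by
  set V : Matrix ι ι 𝕜 := ↑h.eigenvectorUnitary
  have hcomm : V * diagonal (RCLike.ofReal ∘ f ∘ h.eigenvalues) =
      (diagonal fun i => (f (d i) : 𝕜)) * V := by
    ext x j
    rw [mul_diagonal, diagonal_mul]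
    by_cases hxj : V x j = 0
    · simp [hxj]
    · simp [h.eigenvalues_eq_of_eigenvectorUnitary_ne_zero hxj, mul_comm]
  rw [IsHermitian.cfc, Unitary.conjStarAlgAut_apply, hcomm, mul_assoc,
    Unitary.mul_star_self_of_mem h.eigenvectorUnitary.2, mul_one]

end Matrix

open Matrix

lemma matLog_eq_cfc {ι : Type*} [Fintype ι] [DecidableEq ι] {A : Matrix ι ι ℂ}
    (hA : A.IsHermitian) : matLog A = hA.cfc (Real.logb 2) := by
  rw [matLog, dif_pos hA, IsHermitian.cfc, Unitary.conjStarAlgAut_apply]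
  rfl

section Diagonal

variable {ι : Type*} [Fintype ι] [DecidableEq ι]

lemma matLog_diagonal (d : ι → ℝ) :
    matLog (diagonal fun i => (d i : ℂ)) = diagonal fun i => (Real.logb 2 (d i) : ℂ) := by
  have h : (diagonal fun i => (d i : ℂ)).IsHermitian :=
    isHermitian_diagonal_iff.mpr fun i => Complex.conj_ofReal _
  rw [matLog_eq_cfc h]
  exact h.cfc_diagonal _

lemma relEnt_self (ρ : Matrix ι ι ℂ) : relEnt ρ ρ = 0 := by
  simp [relEnt]

lemma relEnt_diagonal (p q : ι → ℝ) :
    relEnt (diagonal fun i => (p i : ℂ)) (diagonal fun i => (q i : ℂ)) =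
      ∑ i, p i * (Real.logb 2 (p i) - Real.logb 2 (q i)) := by
  rw [relEnt, matLog_diagonal, matLog_diagonal, diagonal_sub, diagonal_mul_diagonal,
    trace_diagonal, Complex.re_sum]
  simp

/-- On `supp p` the midpoint of `p` and `q` is `p / 2`, so every point contributes one bit. -/
lemma relEnt_diagonal_half_add_of_disjoint {p q : ι → ℝ} (hp : ∀ i, 0 ≤ p i)
    (hpq : ∀ i, p i = 0 ∨ q i = 0) :
    relEnt (diagonal fun i => (p i : ℂ)) (diagonal fun i => (((1 / 2 : ℝ) • (p + q)) i : ℂ)) =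
      ∑ i, p i := by
  rw [relEnt_diagonal]
  refine Finset.sum_congr rfl fun i _ => ?_
  rcases (hp i).eq_or_lt with hpi | hpi
  · simp [← hpi]
  · have hqi := (hpq i).resolve_left hpi.ne'
    rw [Pi.smul_apply, Pi.add_apply, hqi, add_zero, smul_eq_mul, one_div_mul_eq_div,
      Real.logb_div hpi.ne' two_ne_zero, Real.logb_self_eq_one one_lt_two]
    ring

end Diagonal

section Marginal

variable {n : ℕ} {κ : Fin n → Type*} [∀ i, Fintype (κ i)] [∀ i, DecidableEq (κ i)]
  (S : Finset (Fin n))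

lemma ptr_diagonal_ofReal (P : (∀ i, κ i) → ℝ) :
    ptr S (diagonal fun x => (P x : ℂ)) = diagonal fun a => (marg S P a : ℂ) := by
  ext a b
  rcases eq_or_ne a b with rfl | hab
  · simp [ptr, marg]
  · rw [diagonal_apply_ne _ hab, ptr]
    refine Finset.sum_eq_zero fun z _ => diagonal_apply_ne _ fun hc => hab (funext fun i => ?_)
    simpa [i.2] using congrFun hc i.1

lemma marg_add (P Q : (∀ i, κ i) → ℝ) : marg S (P + Q) = marg S P + marg S Q := by
  ext a
  simp [marg, Finset.sum_add_distrib]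

lemma marg_smul (c : ℝ) (P : (∀ i, κ i) → ℝ) : marg S (c • P) = c • marg S P := by
  ext a
  simp [marg, Finset.mul_sum]

lemma marg_nonneg {P : (∀ i, κ i) → ℝ} (hP : ∀ x, 0 ≤ P x) (a) : 0 ≤ marg S P a :=
  Finset.sum_nonneg fun _ _ => hP _

lemma sum_marg (P : (∀ i, κ i) → ℝ) : ∑ a, marg S P a = ∑ x, P x := by
  unfold marg
  rw [← Fintype.sum_prod_type']
  refine (Fintype.sum_equiv (Equiv.piEquivPiSubtypeProd (· ∈ S) κ) _ _ fun x => ?_).symm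
  refine congrArg P (funext fun i => ?_)
  by_cases h : i ∈ S <;> simp [h, Equiv.piEquivPiSubtypeProd]

lemma ptr_half_smul_add_diagonal (P₀ P₁ : (∀ i, κ i) → ℝ) :
    ptr S ((1 / 2 : ℂ) • (diagonal (fun x => (P₀ x : ℂ)) + diagonal fun x => (P₁ x : ℂ))) =
      diagonal fun a => (((1 / 2 : ℝ) • (marg S P₀ + marg S P₁)) a : ℂ) := by
  have hmix : (1 / 2 : ℂ) • (diagonal (fun x => (P₀ x : ℂ)) + diagonal fun x => (P₁ x : ℂ)) =
      diagonal fun x => (((1 / 2 : ℝ) • (P₀ + P₁)) x : ℂ) := by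
    ext x y
    by_cases hxy : x = y <;> simp [hxy]
  rw [hmix, ptr_diagonal_ofReal, marg_smul, marg_add]

end Marginal

theorem secret_sharing_relEnt_vector_general {n : ℕ} {κ : Fin n → Type*}
    [∀ i, Fintype (κ i)] [∀ i, DecidableEq (κ i)]
    (U : Set (Finset (Fin n)))
    (P₀ P₁ : (∀ i, κ i) → ℝ)
    (hP₀ : ∀ x, 0 ≤ P₀ x)
    (hP₀1 : ∑ x, P₀ x = 1)
    -- for authorised groups, the supports of the `S`-marginals are disjoint:
    (hauth : ∀ S ∈ U, ∀ a, marg S P₀ a = 0 ∨ marg S P₁ a = 0)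
    -- for unauthorised groups, the `S`-marginals coincide:
    (hpriv : ∀ S : Finset (Fin n), S ∉ U → marg S P₀ = marg S P₁) :
    ∀ S : Finset (Fin n), S.Nonempty →
      (S ∈ U →
        relEnt (ptr S (Matrix.diagonal fun x => (P₀ x : ℂ)))
          (ptr S ((1 / 2 : ℂ) • (Matrix.diagonal (fun x => (P₀ x : ℂ)) +
            Matrix.diagonal fun x => (P₁ x : ℂ)))) = 1) ∧
      (S ∉ U →
        relEnt (ptr S (Matrix.diagonal fun x => (P₀ x : ℂ)))
          (ptr S ((1 / 2 : ℂ) • (Matrix.diagonal (fun x => (P₀ x : ℂ)) +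
            Matrix.diagonal fun x => (P₁ x : ℂ)))) = 0) := by
  intro S _
  rw [ptr_diagonal_ofReal, ptr_half_smul_add_diagonal]
  constructor
  · intro hS
    rw [relEnt_diagonal_half_add_of_disjoint (marg_nonneg S hP₀) (hauth S hS), sum_marg, hP₀1]
  · intro hS
    rw [← hpriv S hS, ← two_smul ℝ (marg S P₀), smul_smul]
    norm_num [relEnt_self]

/-- A classical secret sharing scheme with access structure `U` yields a pair
of diagonal states whose relative entropy vector is exactly the indicator
vector of `U`. -/
theorem secret_sharing_relEnt_vector {n : ℕ} {κ : Fin n → Type*}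
    [∀ i, Fintype (κ i)] [∀ i, DecidableEq (κ i)]
    (U : Set (Finset (Fin n))) (hUempty : ∅ ∉ U) (hUne : U.Nonempty)
    (hUup : ∀ S ∈ U, ∀ T : Finset (Fin n), S ⊆ T → T ∈ U)
    (P₀ P₁ : (∀ i, κ i) → ℝ)
    (hP₀ : ∀ x, 0 ≤ P₀ x) (hP₁ : ∀ x, 0 ≤ P₁ x)
    (hP₀1 : ∑ x, P₀ x = 1) (hP₁1 : ∑ x, P₁ x = 1)
    -- for authorised groups, the supports of the `S`-marginals are disjoint:
    (hauth : ∀ S ∈ U, ∀ a, marg S P₀ a = 0 ∨ marg S P₁ a = 0)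
    -- for unauthorised groups, the `S`-marginals coincide:
    (hpriv : ∀ S : Finset (Fin n), S ∉ U → marg S P₀ = marg S P₁) :
    ∀ S : Finset (Fin n), S.Nonempty →
      (S ∈ U →
        relEnt (ptr S (Matrix.diagonal fun x => (P₀ x : ℂ)))
          (ptr S ((1 / 2 : ℂ) • (Matrix.diagonal (fun x => (P₀ x : ℂ)) +
            Matrix.diagonal fun x => (P₁ x : ℂ)))) = 1) ∧
      (S ∉ U →
        relEnt (ptr S (Matrix.diagonal fun x => (P₀ x : ℂ)))
          (ptr S ((1 / 2 : ℂ) • (Matrix.diagonal (fun x => (P₀ x : ℂ)) +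
            Matrix.diagonal fun x => (P₁ x : ℂ)))) = 0) :=
  secret_sharing_relEnt_vector_general U P₀ P₁ hP₀ hP₀1 hauth hpriv
end
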